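/- The q_R-conformal symmetries form an asymptotic representation of the Witt algebra modulo O(ℏ) near the extremal weights 1/2 and 1, in the following instance: there exists a constant C > 0 such that for every real ℏ with 0 < ℏ < 1/4 and every integer n ≥ 2, |λ_n(1/2 + ℏ) − (4n + 2 + 4ℏ)| ≤ C·ℏ and |λ_n(1 + ℏ) − (4n + 4 + 4ℏ)| ≤ C·ℏ; here 4n + 4h is the eigenvalue of 4·L₀ on zⁿ in V_h, so the defect [L₂, L₋₂] − 4·L₀ is uniformly O(ℏ) on the monomial basis for h = 1/2 + ℏ and for h = 1 + ℏ. -/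

import Mathlib

/-!
The defect `λₙ(h) − 4(n + h)` is a rational function of `h` and `n` that factors as
`−4h(2h − 1)(h − 1)·((n + 3h)(n + 3h − 2) − h(h − 1)) / ((n + 2h)(n + 2h + 1)(n + 2h − 1)(n + 2h − 2))`.
It vanishes at the extremal weights `h = 1/2` and `h = 1`, and the remaining quotient has
numerator of degree 2 and denominator of degree 4 in `n`, so it is bounded uniformly in `n ≥ 2`
for `h` near those weights. The factor `(2h − 1)(h − 1)` then contributes the `O(ℏ)`.
-/

noncomputable section

/-- The eigenvalue `λₙ(h)` of the commutator `[L₂, L₋₂]` on the monomial `zⁿ` in the Verma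
module `V_h`:
`λₙ(h) = (n+3h)²(n+1)(n+2)/((n+2h)(n+2h+1)) − (n+3h−2)²·n·(n−1)/((n+2h−1)(n+2h−2))`. -/
def lam (h : ℝ) (n : ℕ) : ℝ :=
  ((n : ℝ) + 3 * h) ^ 2 * ((n : ℝ) + 1) * ((n : ℝ) + 2) /
      (((n : ℝ) + 2 * h) * ((n : ℝ) + 2 * h + 1)) -
    ((n : ℝ) + 3 * h - 2) ^ 2 * (n : ℝ) * ((n : ℝ) - 1) /
      (((n : ℝ) + 2 * h - 1) * ((n : ℝ) + 2 * h - 2))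

theorem lam_sub_four_mul_add {h : ℝ} {n : ℕ} (hn : 2 < (n : ℝ) + 2 * h) :
    lam h n - 4 * (n + h) =
      -4 * h * (2 * h - 1) * (h - 1) *
          (((n : ℝ) + 3 * h) * ((n : ℝ) + 3 * h - 2) - h * (h - 1)) /
        (((n : ℝ) + 2 * h) * ((n : ℝ) + 2 * h + 1) * ((n : ℝ) + 2 * h - 1) *
          ((n : ℝ) + 2 * h - 2)) := by
  have h₀ : (n : ℝ) + 2 * h ≠ 0 := by linarith
  have h₁ : (n : ℝ) + 2 * h + 1 ≠ 0 := by linarith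
  have h₂ : (n : ℝ) + 2 * h - 1 ≠ 0 := by linarith
  have h₃ : (n : ℝ) + 2 * h - 2 ≠ 0 := by linarith
  rw [lam, div_sub_div _ _ (mul_ne_zero h₀ h₁) (mul_ne_zero h₂ h₃), div_sub' (by positivity),
    div_eq_div_iff (by positivity) (by positivity)]
  ring

theorem defect_quotient_bounds {a h : ℝ} (ha : 3 ≤ a) (h_ge : 1 / 2 ≤ h) (h_le : h ≤ 5 / 4) :
    0 ≤ (a + h) * (a + h - 2) - h * (h - 1) ∧
      (a + h) * (a + h - 2) - h * (h - 1) ≤ 3 / 2 * (a * (a + 1) * (a - 1) * (a - 2)) := by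
  have hden : 2 * a ^ 2 ≤ a * (a + 1) * (a - 1) * (a - 2) := by
    nlinarith [mul_nonneg (mul_nonneg (by linarith : (0 : ℝ) ≤ a) (by linarith : (0 : ℝ) ≤ a))
      (by nlinarith : (0 : ℝ) ≤ a ^ 2 - 2 * a - 3)]
  constructor <;> nlinarith

theorem abs_lam_sub_le {h : ℝ} {n : ℕ} (hn : 2 ≤ n) (h_ge : 1 / 2 ≤ h) (h_le : h ≤ 5 / 4) :
    |lam h n - 4 * (n + h)| ≤ 6 * |h * (2 * h - 1) * (h - 1)| := by
  have hn' : (2 : ℝ) ≤ n := by exact_mod_cast hn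
  set a : ℝ := n + 2 * h with ha
  obtain ⟨hQ₀, hQ⟩ := defect_quotient_bounds (a := a) (by linarith) h_ge h_le
  have hD : 0 < a * (a + 1) * (a - 1) * (a - 2) := by
    have : 0 < a - 2 := by linarith
    have : 0 < a - 1 := by linarith
    positivity
  have hQa : ((n : ℝ) + 3 * h) * ((n : ℝ) + 3 * h - 2) = (a + h) * (a + h - 2) := by ring
  set w := h * (2 * h - 1) * (h - 1)
  rw [lam_sub_four_mul_add (by linarith), ← ha, hQa, abs_div, abs_of_pos hD, div_le_iff₀ hD,
    show -4 * h * (2 * h - 1) * (h - 1) = -4 * w by ring, abs_mul, abs_mul (-4 : ℝ),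
    abs_of_nonneg hQ₀]
  norm_num
  nlinarith [abs_nonneg w]

/-- asymptotic representation of the Witt algebra mod O(ℏ) near `h = 1/2` and
`h = 1`: there is `C > 0` such that for all `0 < ℏ < 1/4` and all `n ≥ 2`,
`|λₙ(1/2+ℏ) − (4n+2+4ℏ)| ≤ C·ℏ` and `|λₙ(1+ℏ) − (4n+4+4ℏ)| ≤ C·ℏ`
(here `4n+4h` is the eigenvalue of `4L₀` on `zⁿ`). -/
theorem stmt_17 :
    ∃ C : ℝ, 0 < C ∧
      ∀ ℏ : ℝ, 0 < ℏ → ℏ < 1 / 4 → ∀ n : ℕ, 2 ≤ n →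
        |lam (1 / 2 + ℏ) n - (4 * (n : ℝ) + 2 + 4 * ℏ)| ≤ C * ℏ ∧
        |lam (1 + ℏ) n - (4 * (n : ℝ) + 4 + 4 * ℏ)| ≤ C * ℏ := by
  refine ⟨12, by norm_num, fun ℏ hℏ hℏ_lt n hn => ⟨?_, ?_⟩⟩
  · have hL := abs_lam_sub_le hn (h := 1 / 2 + ℏ) (by linarith) (by linarith)
    have hW : |(1 / 2 + ℏ) * (2 * (1 / 2 + ℏ) - 1) * (1 / 2 + ℏ - 1)| ≤ ℏ := by
      rw [show (1 / 2 + ℏ) * (2 * (1 / 2 + ℏ) - 1) * (1 / 2 + ℏ - 1) = -(ℏ * (1 - 4 * ℏ ^ 2) / 2)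
        by ring, abs_neg, abs_of_nonneg (by nlinarith)]
      nlinarith
    calc |lam (1 / 2 + ℏ) n - (4 * (n : ℝ) + 2 + 4 * ℏ)|
        = |lam (1 / 2 + ℏ) n - 4 * (n + (1 / 2 + ℏ))| := by ring_nf
      _ ≤ 12 * ℏ := by linarith
  · have hL := abs_lam_sub_le hn (h := 1 + ℏ) (by linarith) (by linarith)
    have hW : |(1 + ℏ) * (2 * (1 + ℏ) - 1) * (1 + ℏ - 1)| ≤ 2 * ℏ := by
      rw [show (1 + ℏ) * (2 * (1 + ℏ) - 1) * (1 + ℏ - 1) = ℏ * ((1 + ℏ) * (1 + 2 * ℏ)) by ring,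
        abs_of_nonneg (by positivity)]
      nlinarith [mul_pos hℏ (sub_pos.2 hℏ_lt), mul_pos (mul_pos hℏ hℏ) (sub_pos.2 hℏ_lt)]
    calc |lam (1 + ℏ) n - (4 * (n : ℝ) + 4 + 4 * ℏ)|
        = |lam (1 + ℏ) n - 4 * (n + (1 + ℏ))| := by ring_nf
      _ ≤ 12 * ℏ := by linarith

end
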